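/- Consider φ'' = (Fl₁ sin φ - k₁φ)/C with C > 0, k₁ > 0 and any F ∈ ℝ. Then every solution is bounded and, moreover, the energy E = (φ')²/2 + (k₁φ²/2 + Fl₁ cos φ)/C is constant along solutions and its level sets are compact; for all sufficiently large energy values the level set is a single closed curve symmetric under (φ, φ') ↦ (-φ, -φ') and under (φ, φ') ↦ (φ, -φ'), on which φ assumes the value 0. -/

import Mathlib

/-!
Write `En (φ, v) = v² / 2 + potential φ`. Since `k₁ > 0` the even potential is bounded below by a
quadratic, so the energy is proper; it is conserved because `φ'' = -potential' φ`. Beyond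
`|Fl₁| / k₁` the potential is strictly increasing, so once `h` exceeds its maximum on
`[-|Fl₁| / k₁, |Fl₁| / k₁]`, `potential φ ≤ h` holds exactly on some `[-r, r]`, with equality only
at `± r`. The level set `v² = 2 (h - potential φ)` is then an oval over `[-r, r]`, mapped onto the
unit circle by `(φ, v) ↦ (φ / r, sign v · √(1 - (φ / r)²))`; its inverse
`(a, b) ↦ (r a, sign b · √(2 (h - potential (r a))))` is continuous by compactness.
-/

/-- The energy of the system `φ'' = (Fl₁ sin φ - k₁φ)/C`. -/
noncomputable def En (F l1 k1 C : ℝ) (p : ℝ × ℝ) : ℝ :=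
  p.2 ^ 2 / 2 + (k1 * p.1 ^ 2 / 2 + F * l1 * Real.cos p.1) / C

open Real Set Filter Topology

theorem Real.sign_sign_mul_sqrt_mul_abs {v c : ℝ} (hc : 0 ≤ c) (hv : c = 0 → v = 0) :
    Real.sign (Real.sign v * √c) * |v| = v := by
  rcases lt_trichotomy v 0 with hv' | rfl | hv'
  · have : 0 < √c := Real.sqrt_pos.2 (hc.lt_of_ne fun h => hv'.ne (hv h.symm))
    simp [Real.sign_of_neg hv', Real.sign_of_neg (neg_neg_of_pos this), abs_of_neg hv']
  · simp
  · have : 0 < √c := Real.sqrt_pos.2 (hc.lt_of_ne fun h => hv'.ne' (hv h.symm))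
    simp [Real.sign_of_pos hv', Real.sign_of_pos this, abs_of_pos hv']

theorem Real.sign_mul_sqrt_sq {v c : ℝ} (hc : 0 ≤ c) (hv : v = 0 → c = 0) :
    (Real.sign v * √c) ^ 2 = c := by
  rcases eq_or_ne v 0 with rfl | hv'
  · simp [hv rfl]
  · rcases Real.sign_apply_eq_of_ne_zero v hv' with hs | hs <;> simp [hs, Real.sq_sqrt hc]

theorem Real.continuous_sign_mul {X : Type*} [TopologicalSpace X] {u f : X → ℝ}
    (hu : Continuous u) (hf : Continuous f) (h : ∀ x, u x = 0 → f x = 0) :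
    Continuous fun x => Real.sign (u x) * f x := by
  refine continuous_iff_continuousAt.2 fun x => ?_
  rcases lt_trichotomy (u x) 0 with hx | hx | hx
  · have : (fun y => -f y) =ᶠ[𝓝 x] fun y => Real.sign (u y) * f y := by
      filter_upwards [hu.continuousAt.eventually_lt continuousAt_const hx] with y hy
      simp [Real.sign_of_neg hy]
    exact hf.continuousAt.neg.congr this
  · have hbound (y : X) : ‖Real.sign (u y) * f y‖ ≤ |f y| := by
      rcases Real.sign_apply_eq (u y) with hs | hs | hs <;> simp [hs]
    have hf0 : Tendsto (fun y => |f y|) (𝓝 x) (𝓝 0) := by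
      simpa [h x hx] using hf.abs.tendsto x
    simpa [ContinuousAt, hx] using squeeze_zero_norm hbound hf0
  · have : f =ᶠ[𝓝 x] fun y => Real.sign (u y) * f y := by
      filter_upwards [continuousAt_const.eventually_lt hu.continuousAt hx] with y hy
      simp [Real.sign_of_pos hy]
    exact hf.continuousAt.congr this

theorem mul_le_abs_of_abs_le_one (a : ℝ) {t : ℝ} (ht : |t| ≤ 1) : a * t ≤ |a| :=
  (le_abs_self _).trans (by rw [abs_mul]; exact mul_le_of_le_one_right (abs_nonneg a) ht)

theorem isConnected_sphere_euclideanSpace {n : ℕ} (hn : 2 ≤ n) (x : EuclideanSpace ℝ (Fin n))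
    {r : ℝ} (hr : 0 ≤ r) : IsConnected (Metric.sphere x r) :=
  isConnected_sphere
    (by rw [← Module.finrank_eq_rank, finrank_euclideanSpace_fin]; exact_mod_cast hn) x hr

theorem IsConnected.of_homeomorph {X Y : Type*} [TopologicalSpace X] [TopologicalSpace Y]
    {S : Set X} {T : Set Y} (hT : IsConnected T) (e : S ≃ₜ T) : IsConnected S := by
  have := isConnected_iff_connectedSpace.1 hT
  exact isConnected_iff_connectedSpace.2 (e.symm.surjective.connectedSpace e.symm.continuous)

theorem EuclideanSpace.mem_sphere_zero_one_iff (q : EuclideanSpace ℝ (Fin 2)) :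
    q ∈ Metric.sphere 0 1 ↔ q 0 ^ 2 + q 1 ^ 2 = 1 := by
  rw [mem_sphere_zero_iff_norm, ← sq_eq_sq₀ (norm_nonneg q) zero_le_one, one_pow,
    EuclideanSpace.norm_sq_eq, Fin.sum_univ_two, Real.norm_eq_abs, Real.norm_eq_abs, sq_abs,
    sq_abs]

theorem one_sub_div_sq_nonneg_iff {r : ℝ} (hr : 0 < r) (x : ℝ) :
    0 ≤ 1 - (x / r) ^ 2 ↔ |x| ≤ r := by
  rw [sub_nonneg, sq_le_one_iff_abs_le_one, abs_div, abs_of_pos hr, div_le_one hr]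

theorem one_sub_div_sq_eq_zero_iff {r : ℝ} (hr : 0 < r) (x : ℝ) :
    1 - (x / r) ^ 2 = 0 ↔ |x| = r := by
  rw [sub_eq_zero, eq_comm, ← sq_abs, pow_eq_one_iff_of_nonneg (abs_nonneg _) two_ne_zero,
    abs_div, abs_of_pos hr, div_eq_one_iff_eq hr.ne']

section Oval

variable {g : ℝ → ℝ} {r : ℝ}

theorem one_sub_div_sq_nonneg_and_eq_zero_iff (hr : 0 < r)
    (hnonneg : ∀ x, 0 ≤ g x ↔ |x| ≤ r) (hzero : ∀ x, g x = 0 ↔ |x| = r) {x v : ℝ}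
    (h : v ^ 2 = g x) : 0 ≤ 1 - (x / r) ^ 2 ∧ (1 - (x / r) ^ 2 = 0 ↔ v = 0) := by
  rw [one_sub_div_sq_nonneg_iff hr, one_sub_div_sq_eq_zero_iff hr, ← hnonneg, ← hzero, ← h,
    pow_eq_zero_iff two_ne_zero]
  exact ⟨sq_nonneg _, Iff.rfl⟩

theorem apply_mul_nonneg_and_eq_zero_iff (hr : 0 < r)
    (hnonneg : ∀ x, 0 ≤ g x ↔ |x| ≤ r) (hzero : ∀ x, g x = 0 ↔ |x| = r) {a b : ℝ}
    (h : a ^ 2 + b ^ 2 = 1) : 0 ≤ g (r * a) ∧ (g (r * a) = 0 ↔ b = 0) := by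
  have hb : 1 - (r * a / r) ^ 2 = b ^ 2 := by
    rw [mul_div_cancel_left₀ _ hr.ne', ← h]; ring
  rw [hnonneg, hzero, ← one_sub_div_sq_nonneg_iff hr, ← one_sub_div_sq_eq_zero_iff hr, hb,
    pow_eq_zero_iff two_ne_zero]
  exact ⟨sq_nonneg _, Iff.rfl⟩

theorem nonempty_homeomorph_sphere_of_sq_eq (hr : 0 < r)
    (hnonneg : ∀ x, 0 ≤ g x ↔ |x| ≤ r) (hzero : ∀ x, g x = 0 ↔ |x| = r)
    (hS : IsCompact {p : ℝ × ℝ | p.2 ^ 2 = g p.1}) :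
    Nonempty ({p : ℝ × ℝ | p.2 ^ 2 = g p.1} ≃ₜ
      Metric.sphere (0 : EuclideanSpace ℝ (Fin 2)) 1) := by
  set S := {p : ℝ × ℝ | p.2 ^ 2 = g p.1}
  have hS_radicand {p : ℝ × ℝ} (hp : p ∈ S) :=
    one_sub_div_sq_nonneg_and_eq_zero_iff hr hnonneg hzero (show p.2 ^ 2 = g p.1 from hp)
  have hsphere_radicand {q : EuclideanSpace ℝ (Fin 2)} (hq : q ∈ Metric.sphere 0 1) :=
    apply_mul_nonneg_and_eq_zero_iff hr hnonneg hzero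
      ((EuclideanSpace.mem_sphere_zero_one_iff q).1 hq)
  let toSphere : S → Metric.sphere (0 : EuclideanSpace ℝ (Fin 2)) 1 := fun p =>
    ⟨!₂[p.1.1 / r, Real.sign p.1.2 * √(1 - (p.1.1 / r) ^ 2)], by
      obtain ⟨hc, hc0⟩ := hS_radicand p.2
      rw [EuclideanSpace.mem_sphere_zero_one_iff]
      simp only [Matrix.cons_val_zero, Matrix.cons_val_one]
      rw [Real.sign_mul_sqrt_sq hc hc0.2, add_sub_cancel]⟩
  let ofSphere : Metric.sphere (0 : EuclideanSpace ℝ (Fin 2)) 1 → S := fun q =>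
    ⟨(r * q.1 0, Real.sign (q.1 1) * √(g (r * q.1 0))), by
      obtain ⟨hc, hc0⟩ := hsphere_radicand q.2
      exact Real.sign_mul_sqrt_sq hc hc0.2⟩
  have hleft : Function.LeftInverse ofSphere toSphere := by
    rintro ⟨p, hp⟩
    obtain ⟨hc, hc0⟩ := hS_radicand hp
    ext
    · exact mul_div_cancel₀ _ hr.ne'
    · show Real.sign (Real.sign p.2 * √(1 - (p.1 / r) ^ 2)) * √(g (r * (p.1 / r))) = p.2
      rw [mul_div_cancel₀ _ hr.ne', ← show p.2 ^ 2 = g p.1 from hp, Real.sqrt_sq_eq_abs]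
      exact Real.sign_sign_mul_sqrt_mul_abs hc hc0.1
  have hright : Function.RightInverse ofSphere toSphere := by
    rintro ⟨q, hq⟩
    obtain ⟨hc, hc0⟩ := hsphere_radicand hq
    ext i
    fin_cases i
    · exact mul_div_cancel_left₀ _ hr.ne'
    · show Real.sign (Real.sign (q 1) * √(g (r * q 0))) * √(1 - (r * q 0 / r) ^ 2) = q 1
      rw [mul_div_cancel_left₀ _ hr.ne', ← (EuclideanSpace.mem_sphere_zero_one_iff q).1 hq,
        add_sub_cancel_left, Real.sqrt_sq_eq_abs]
      exact Real.sign_sign_mul_sqrt_mul_abs hc hc0.1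
  have hcont : Continuous toSphere := by
    have := Real.continuous_sign_mul (u := fun p : S => p.1.2)
      (f := fun p : S => √(1 - (p.1.1 / r) ^ 2)) (by fun_prop) (by fun_prop)
      fun p h0 => by rw [(hS_radicand p.2).2.2 h0, Real.sqrt_zero]
    exact Continuous.subtype_mk (by fun_prop) _
  have : CompactSpace S := isCompact_iff_compactSpace.1 hS
  exact ⟨hcont.homeoOfEquivCompactToT2 (f := ⟨toSphere, ofSphere, hleft, hright⟩)⟩

end Oval

theorem Function.Even.apply_abs {U : ℝ → ℝ} (hU : Function.Even U) (x : ℝ) : U |x| = U x := by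
  rcases abs_choice x with h | h <;> rw [h]
  exact hU x

theorem exists_le_iff_abs_le_of_even {U : ℝ → ℝ} {R h : ℝ} (hR : 0 ≤ R) (hUc : Continuous U)
    (hUe : Function.Even U) (hmono : StrictMonoOn U (Ici R)) (htop : Tendsto U atTop atTop)
    (hlow : ∀ x, |x| ≤ R → U x < h) :
    ∃ r, 0 < r ∧ ∀ x, (U x ≤ h ↔ |x| ≤ r) ∧ (U x = h ↔ |x| = r) := by
  obtain ⟨X, hX, hRX⟩ := ((htop.eventually_gt_atTop h).and (eventually_ge_atTop R)).exists
  have hUR : U R < h := hlow R (abs_of_nonneg hR).le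
  obtain ⟨r, ⟨hRr, -⟩, hr⟩ := intermediate_value_Icc hRX hUc.continuousOn ⟨hUR.le, hX.le⟩
  have hRr : R < r := hRr.lt_of_ne (by rintro rfl; exact hUR.ne hr)
  refine ⟨r, hR.trans_lt hRr, fun x => ?_⟩
  rw [← hUe.apply_abs, ← hr]
  rcases le_or_gt |x| R with hx | hx
  · have := hlow |x| ((abs_abs x).trans_le hx)
    rw [hr]
    exact ⟨iff_of_true this.le (by linarith), iff_of_false this.ne (by linarith)⟩
  · exact ⟨hmono.le_iff_le hx.le hRr.le, hmono.injOn.eq_iff hx.le hRr.le⟩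

noncomputable def potential (F l1 k1 C : ℝ) (x : ℝ) : ℝ :=
  (k1 * x ^ 2 / 2 + F * l1 * Real.cos x) / C

theorem En_eq (F l1 k1 C : ℝ) (p : ℝ × ℝ) :
    En F l1 k1 C p = p.2 ^ 2 / 2 + potential F l1 k1 C p.1 :=
  rfl

section Potential

variable {F l1 k1 C : ℝ}

theorem continuous_potential : Continuous (potential F l1 k1 C) := by
  unfold potential; fun_prop

theorem potential_even : Function.Even (potential F l1 k1 C) := fun x => by
  simp [potential]

theorem hasDerivAt_potential (x : ℝ) :
    HasDerivAt (potential F l1 k1 C) ((k1 * x - F * l1 * Real.sin x) / C) x := by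
  have := ((((hasDerivAt_pow 2 x).const_mul k1).div_const 2).add
    ((Real.hasDerivAt_cos x).const_mul (F * l1))).div_const C
  exact this.congr_deriv (by norm_num; ring)

theorem potential_le (hC : 0 < C) (hk1 : 0 ≤ k1) {x R : ℝ} (hx : |x| ≤ R) :
    potential F l1 k1 C x ≤ (k1 * R ^ 2 / 2 + |F * l1|) / C := by
  have hx2 : x ^ 2 ≤ R ^ 2 := sq_le_sq' (abs_le.1 hx).1 (abs_le.1 hx).2
  unfold potential
  gcongr
  exact mul_le_abs_of_abs_le_one _ (abs_cos_le_one x)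

theorem le_potential (hC : 0 < C) (x : ℝ) :
    (k1 * x ^ 2 / 2 - |F * l1|) / C ≤ potential F l1 k1 C x := by
  unfold potential
  gcongr
  linarith [mul_le_abs_of_abs_le_one (-(F * l1)) (abs_cos_le_one x), abs_neg (F * l1)]

theorem tendsto_potential_atTop (hC : 0 < C) (hk1 : 0 < k1) :
    Tendsto (potential F l1 k1 C) atTop atTop := by
  refine tendsto_atTop_mono (le_potential hC) ?_
  refine Tendsto.atTop_div_const hC (tendsto_atTop_add_const_right _ _ ?_)
  exact ((tendsto_pow_atTop two_ne_zero).const_mul_atTop hk1).atTop_div_const two_pos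

theorem strictMonoOn_potential (hC : 0 < C) (hk1 : 0 < k1) :
    StrictMonoOn (potential F l1 k1 C) (Ici (|F * l1| / k1)) := by
  refine strictMonoOn_of_deriv_pos (convex_Ici _) continuous_potential.continuousOn fun x hx => ?_
  rw [interior_Ici, mem_Ioi, div_lt_iff₀ hk1] at hx
  rw [(hasDerivAt_potential x).deriv]
  have := mul_le_abs_of_abs_le_one (F * l1) (abs_sin_le_one x)
  exact div_pos (by linarith) hC

end Potential

section Energy

variable {F l1 k1 C : ℝ}

theorem En_eq_of_hasDerivAt {x v : ℝ → ℝ} (hx : ∀ t, HasDerivAt x (v t) t)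
    (hv : ∀ t, HasDerivAt v ((F * l1 * Real.sin (x t) - k1 * x t) / C) t) (t s : ℝ) :
    En F l1 k1 C (x t, v t) = En F l1 k1 C (x s, v s) := by
  have hd (t : ℝ) : HasDerivAt (fun t => En F l1 k1 C (x t, v t)) 0 t :=
    (((hv t).pow 2).div_const 2).add ((hasDerivAt_potential (x t)).comp t (hx t))
      |>.congr_deriv (by push_cast; ring)
  exact is_const_of_deriv_eq_zero (fun t => (hd t).differentiableAt) (fun t => (hd t).deriv) t s

theorem isCompact_setOf_En_eq (hC : 0 < C) (hk1 : 0 < k1) (h : ℝ) :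
    IsCompact {p : ℝ × ℝ | En F l1 k1 C p = h} := by
  refine Metric.isCompact_of_isClosed_isBounded
    (isClosed_eq (by unfold En; fun_prop) continuous_const) (isBounded_iff_forall_norm_le.2
      ⟨max √(2 * (h * C + |F * l1|) / k1) √(2 * (h + |F * l1| / C)), fun p hp => ?_⟩)
  have hU := le_potential (F := F) (l1 := l1) (k1 := k1) hC p.1
  rw [mem_ofPred_eq, En_eq] at hp
  have hUh : potential F l1 k1 C p.1 ≤ h := by nlinarith [sq_nonneg p.2]
  rw [Prod.norm_def, Real.norm_eq_abs, Real.norm_eq_abs]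
  refine max_le_max (Real.abs_le_sqrt ?_) (Real.abs_le_sqrt ?_)
  · rw [le_div_iff₀ hk1]
    linarith [(div_le_iff₀ hC).1 (hU.trans hUh)]
  · have : 0 ≤ k1 * p.1 ^ 2 / 2 / C := by positivity
    rw [sub_div] at hU
    linarith

theorem setOf_En_eq (h : ℝ) : {p : ℝ × ℝ | En F l1 k1 C p = h} =
    {p : ℝ × ℝ | p.2 ^ 2 = 2 * (h - potential F l1 k1 C p.1)} := by
  ext p
  simp only [mem_ofPred_eq, En_eq]
  constructor <;> intro <;> linarith

theorem En_neg (p : ℝ × ℝ) : En F l1 k1 C (-p.1, -p.2) = En F l1 k1 C p := by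
  simp [En]

theorem En_neg_snd (p : ℝ × ℝ) : En F l1 k1 C (p.1, -p.2) = En F l1 k1 C p := by
  simp [En]

end Energy

/-- For `φ'' = (Fl₁ sin φ - k₁φ)/C` with `k₁ > 0`: every solution is bounded,
the energy is a first integral with compact level sets, and all sufficiently
high energy level sets are single closed curves, symmetric with respect to both
coordinate axes, on which `φ` attains the value `0`. -/
theorem proper_energy_high_level_sets
    (F l1 k1 C : ℝ) (hC : 0 < C) (hk1 : 0 < k1) :
    -- every solution is bounded
    (∀ x v : ℝ → ℝ, (∀ t, HasDerivAt x (v t) t) →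
      (∀ t, HasDerivAt v ((F * l1 * Real.sin (x t) - k1 * x t) / C) t) →
      ∃ M : ℝ, ∀ t, |x t| ≤ M ∧ |v t| ≤ M) ∧
    -- the energy is constant along solutions
    (∀ x v : ℝ → ℝ, (∀ t, HasDerivAt x (v t) t) →
      (∀ t, HasDerivAt v ((F * l1 * Real.sin (x t) - k1 * x t) / C) t) →
      ∀ t s : ℝ, En F l1 k1 C (x t, v t) = En F l1 k1 C (x s, v s)) ∧
    -- level sets of the energy are compact
    (∀ h : ℝ, IsCompact {p : ℝ × ℝ | En F l1 k1 C p = h}) ∧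
    -- high level sets are single closed curves, symmetric, meeting {φ = 0}
    (∃ h₀ : ℝ, ∀ h : ℝ, h₀ < h →
      IsConnected {p : ℝ × ℝ | En F l1 k1 C p = h} ∧
      Nonempty ({p : ℝ × ℝ | En F l1 k1 C p = h} ≃ₜ
        Metric.sphere (0 : EuclideanSpace ℝ (Fin 2)) 1) ∧
      (∀ p : ℝ × ℝ, En F l1 k1 C p = h → En F l1 k1 C (-p.1, -p.2) = h) ∧
      (∀ p : ℝ × ℝ, En F l1 k1 C p = h → En F l1 k1 C (p.1, -p.2) = h) ∧
      ∃ w : ℝ, En F l1 k1 C (0, w) = h) := by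
  have hcpt := isCompact_setOf_En_eq (F := F) (l1 := l1) hC hk1
  refine ⟨fun x v hx hv => ?_, fun x v hx hv => En_eq_of_hasDerivAt hx hv, hcpt,
    (k1 * (|F * l1| / k1) ^ 2 / 2 + |F * l1|) / C, fun h hh => ?_⟩
  · obtain ⟨M, hM⟩ := isBounded_iff_forall_norm_le.1 (hcpt (En F l1 k1 C (x 0, v 0))).isBounded
    refine ⟨M, fun t => ?_⟩
    have hMt := hM _ (En_eq_of_hasDerivAt hx hv t 0)
    exact ⟨(norm_fst_le _).trans hMt, (norm_snd_le _).trans hMt⟩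
  obtain ⟨r, hr, hturn⟩ := exists_le_iff_abs_le_of_even (div_nonneg (abs_nonneg _) hk1.le)
    continuous_potential potential_even (strictMonoOn_potential hC hk1)
    (tendsto_potential_atTop hC hk1) fun x hx => (potential_le hC hk1.le hx).trans_lt hh
  have hcircle : Nonempty ({p : ℝ × ℝ | En F l1 k1 C p = h} ≃ₜ
      Metric.sphere (0 : EuclideanSpace ℝ (Fin 2)) 1) := by
    have hcpt_h := hcpt h
    rw [setOf_En_eq] at hcpt_h ⊢
    refine nonempty_homeomorph_sphere_of_sq_eq (g := fun x => 2 * (h - potential F l1 k1 C x)) hr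
      (fun x => ?_) (fun x => ?_) hcpt_h
    · rw [← (hturn x).1]; constructor <;> intro <;> linarith
    · rw [← (hturn x).2]; constructor <;> intro <;> linarith
  obtain ⟨e⟩ := hcircle
  refine ⟨(isConnected_sphere_euclideanSpace le_rfl 0 zero_le_one).of_homeomorph e, ⟨e⟩,
    fun p hp => (En_neg p).trans hp, fun p hp => (En_neg_snd p).trans hp, ?_⟩
  have h0 : potential F l1 k1 C 0 ≤ h := (hturn 0).1.2 (by rw [abs_zero]; exact hr.le)
  exact ⟨√(2 * (h - potential F l1 k1 C 0)), by rw [En_eq, Real.sq_sqrt (by linarith)]; ring⟩
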